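/- Let K ⊆ QC(A,A') and M ⊆ QC(B,B') be convex sets of quantum channels. Then every locally-applicable transformation S : K → M on QC preserves convex combinations: for every pair of objects X, X', every φ₀, φ₁ ∈ dExt_{X,X'}(K) and every p ∈ [0,1], S_{X,X'}(p·φ₀ + (1-p)·φ₁) = p·S_{X,X'}(φ₀) + (1-p)·S_{X,X'}(φ₁). -/

import Mathlib

/-!
Given `Φ₀, Φ₁ ∈ dExt K X X'`, let `Ψ` be the classically controlled channel that measures a
control qubit and applies `Φ₀` or `Φ₁` accordingly. Every reduction of `Ψ` by a state is a convex
combination of reductions of `Φ₀` and `Φ₁`, so `Ψ` lies in a dilation extension of the convex set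
`K`. Preparing the control in `diag(p, 1 - p)` and discarding it turns `Ψ` into
`p • Φ₀ + (1 - p) • Φ₁`. This preparation and discarding is a local action on the ancillas, so
`S` commutes with it, and the result is affine in the prepared state: hence
`S (p • Φ₀ + (1 - p) • Φ₁) = p • S Φ₀ + (1 - p) • S Φ₁`.
-/

noncomputable section
open scoped ComplexOrder
attribute [local instance] Classical.propDecidable
attribute [local instance] FintypeCat.fintype

/-- Square matrices over `ℂ` indexed by `A`: the operators on the Hilbert space `ℂ^A`. -/
abbrev Mat (A : Type) : Type := Matrix A A ℂ

/-- The tensor product (Kronecker product) of two linear maps between matrix algebras. -/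
noncomputable def tensorMap {A B A' B' : Type} [Fintype A] [Fintype B]
    (φ : Mat A →ₗ[ℂ] Mat A') (ψ : Mat B →ₗ[ℂ] Mat B') :
    Mat (A × B) →ₗ[ℂ] Mat (A' × B') where
  toFun X := fun p q =>
    ∑ i : A, ∑ k : A, ∑ j : B, ∑ l : B,
      X (i, j) (k, l) * (φ (Matrix.single i k 1) p.1 q.1 *
        ψ (Matrix.single j l 1) p.2 q.2)
  map_add' X Y := by
    funext p q
    simp [Matrix.add_apply, add_mul, Finset.sum_add_distrib]; rfl
  map_smul' c X := by
    funext p q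
    simp [Matrix.smul_apply, Finset.mul_sum, smul_eq_mul, mul_assoc]; erw [Matrix.smul_apply]; simp [Finset.mul_sum, smul_eq_mul, mul_assoc]

/-- Partial trace over the second tensor factor. -/
noncomputable def ptrace {A X : Type} [Fintype X] : Mat (A × X) →ₗ[ℂ] Mat A where
  toFun M := fun a b => ∑ x : X, M (a, x) (b, x)
  map_add' M N := by funext a b; simp [Matrix.add_apply, Finset.sum_add_distrib]; rfl
  map_smul' c M := by funext a b; simp [Matrix.smul_apply, Finset.mul_sum, smul_eq_mul]; erw [Matrix.smul_apply]; simp [Finset.mul_sum, smul_eq_mul, mul_assoc]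

/-- Tensoring with a fixed state on the right: `M ↦ M ⊗ ρ`. -/
noncomputable def prep {A X : Type} (ρ : Mat X) : Mat A →ₗ[ℂ] Mat (A × X) where
  toFun M := fun p q => M p.1 q.1 * ρ p.2 q.2
  map_add' M N := by funext p q; simp [Matrix.add_apply, add_mul]; rfl
  map_smul' c M := by funext p q; simp [Matrix.smul_apply, smul_eq_mul, mul_assoc]; erw [Matrix.smul_apply]; simp [Finset.mul_sum, smul_eq_mul, mul_assoc]

/-- Applying a (possibly unnormalised) effect, given by a matrix `e`, to the second
tensor factor: `id ⊗ tr(e ·)`. -/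
noncomputable def effApp {A X : Type} [Fintype X] (e : Mat X) : Mat (A × X) →ₗ[ℂ] Mat A where
  toFun M := fun a b => ∑ x : X, ∑ y : X, M (a, x) (b, y) * e y x
  map_add' M N := by funext a b; simp [Matrix.add_apply, add_mul, Finset.sum_add_distrib]; rfl
  map_smul' c M := by funext a b; simp [Matrix.smul_apply, Finset.mul_sum, smul_eq_mul, mul_assoc]; erw [Matrix.smul_apply]; simp [Finset.mul_sum, smul_eq_mul, mul_assoc]

/-- A density operator: positive semidefinite with unit trace. -/
def IsDensity {X : Type} [Fintype X] (ρ : Mat X) : Prop :=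
  ρ.PosSemidef ∧ ρ.trace = 1

/-- Complete positivity of a linear map between matrix algebras. -/
def IsCP {A A' : Type} [Fintype A] [Fintype A'] (φ : Mat A →ₗ[ℂ] Mat A') : Prop :=
  ∀ (E : FintypeCat.{0}) (X : Mat (A × E)), X.PosSemidef →
    ((tensorMap φ (LinearMap.id : Mat E →ₗ[ℂ] Mat E)) X).PosSemidef

/-- A quantum channel: a completely positive trace-preserving map. -/
def IsChannel {A A' : Type} [Fintype A] [Fintype A'] (φ : Mat A →ₗ[ℂ] Mat A') : Prop :=
  IsCP φ ∧ ∀ X : Mat A, (φ X).trace = X.trace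

/-- The dilation extension of a set `K` of channels by ancillary systems `X, X'`:
those channels `Φ : A ⊗ X → A' ⊗ X'` all of whose reductions by states on `X` and the
trace on `X'` lie in `K`. -/
def dExt {A A' : Type} [Fintype A] [Fintype A'] (K : Set (Mat A →ₗ[ℂ] Mat A'))
    (X X' : Type) [Fintype X] [Fintype X'] :
    Set (Mat (A × X) →ₗ[ℂ] Mat (A' × X')) :=
  {Φ | IsChannel Φ ∧ ∀ ρ : Mat X, IsDensity ρ → (ptrace ∘ₗ Φ ∘ₗ prep ρ) ∈ K}

/-- Closure under convex combinations. -/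
def IsConvexSet {A A' : Type} (K : Set (Mat A →ₗ[ℂ] Mat A')) : Prop :=
  ∀ φ₀ ∈ K, ∀ φ₁ ∈ K, ∀ p : ℝ, 0 ≤ p → p ≤ 1 →
    ((p : ℂ) • φ₀ + (1 - (p : ℂ)) • φ₁) ∈ K

/-- The discard-prepare channel `M ↦ tr(M) • ρ`. -/
noncomputable def discardPrep {A A' : Type} [Fintype A] (ρ : Mat A') : Mat A →ₗ[ℂ] Mat A' :=
  (Matrix.traceLinearMap A ℂ ℂ).smulRight ρ

/-- A normal set of channels: one containing every discard-prepare channel. -/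
def IsNormalSet {A A' : Type} [Fintype A] [Fintype A'] (K : Set (Mat A →ₗ[ℂ] Mat A')) : Prop :=
  ∀ ρ : Mat A', IsDensity ρ → discardPrep ρ ∈ K

/-- Matrix reassociation `(A ⊗ X) ⊗ Y → A ⊗ (X ⊗ Y)` as a linear map. -/
noncomputable def assocL (A X Y : Type) : Mat ((A × X) × Y) →ₗ[ℂ] Mat (A × (X × Y)) :=
  (Matrix.reindexLinearEquiv ℂ ℂ (Equiv.prodAssoc A X Y) (Equiv.prodAssoc A X Y)).toLinearMap

/-- Matrix reassociation `A ⊗ (X ⊗ Y) → (A ⊗ X) ⊗ Y` as a linear map. -/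
noncomputable def assocR (A X Y : Type) : Mat (A × (X × Y)) →ₗ[ℂ] Mat ((A × X) × Y) :=
  (Matrix.reindexLinearEquiv ℂ ℂ (Equiv.prodAssoc A X Y).symm
    (Equiv.prodAssoc A X Y).symm).toLinearMap

/-- `(id_{A'} ⊗ g) ∘ (Φ ⊗ id_Z) ∘ (id_A ⊗ f)`, suppressing associativity isomorphisms. -/
noncomputable def slide {A A' X X' Y Y' Z : Type}
    [Fintype A] [Fintype A'] [Fintype X] [Fintype X'] [Fintype Y] [Fintype Y'] [Fintype Z]
    (f : Mat Y →ₗ[ℂ] Mat (X × Z)) (g : Mat (X' × Z) →ₗ[ℂ] Mat Y')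
    (Φ : Mat (A × X) →ₗ[ℂ] Mat (A' × X')) : Mat (A × Y) →ₗ[ℂ] Mat (A' × Y') :=
  tensorMap (LinearMap.id : Mat A' →ₗ[ℂ] Mat A') g ∘ₗ assocL A' X' Z ∘ₗ
    tensorMap Φ (LinearMap.id : Mat Z →ₗ[ℂ] Mat Z) ∘ₗ assocR A X Z ∘ₗ
      tensorMap (LinearMap.id : Mat A →ₗ[ℂ] Mat A) f

/-- A locally-applicable transformation of type `K → M` on the category of quantum
channels: a family of functions between dilation extensions commuting with all local
actions on the ancillary systems. -/
structure LocApp {A A' B B' : Type} [Fintype A] [Fintype A'] [Fintype B] [Fintype B']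
    (K : Set (Mat A →ₗ[ℂ] Mat A')) (M : Set (Mat B →ₗ[ℂ] Mat B')) where
  app : ∀ (X X' : FintypeCat.{0}), ↥(dExt K X X') → ↥(dExt M X X')
  natural : ∀ (X X' Y Y' Z : FintypeCat.{0})
      (f : Mat Y →ₗ[ℂ] Mat (X × Z)) (g : Mat (X' × Z) →ₗ[ℂ] Mat Y'),
      IsChannel f → IsChannel g →
      ∀ (Φ : ↥(dExt K X X')) (h : slide f g Φ.1 ∈ dExt K Y Y'),
        (app Y Y' ⟨slide f g Φ.1, h⟩).1 = slide f g (app X X' Φ).1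

/-- A set of channels has control if any two members of a common dilation extension
arise as reductions of a single member by a pair of density operators. -/
def HasControl {A A' : Type} [Fintype A] [Fintype A'] (K : Set (Mat A →ₗ[ℂ] Mat A')) : Prop :=
  ∀ (X X' : FintypeCat.{0}), ∀ φ₀ ∈ dExt K X X', ∀ φ₁ ∈ dExt K X X',
    ∃ (Y Y' : FintypeCat.{0}) (Φ : Mat (A × (X × Y)) →ₗ[ℂ] Mat (A' × (X' × Y')))
      (ρ₀ ρ₁ : Mat Y),
      Φ ∈ dExt K (X × Y) (X' × Y') ∧ IsDensity ρ₀ ∧ IsDensity ρ₁ ∧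
      ptrace ∘ₗ assocR A' X' Y' ∘ₗ Φ ∘ₗ assocL A X Y ∘ₗ prep ρ₀ = φ₀ ∧
      ptrace ∘ₗ assocR A' X' Y' ∘ₗ Φ ∘ₗ assocL A X Y ∘ₗ prep ρ₁ = φ₁

/-- The Choi matrix of a linear map between matrix algebras. -/
noncomputable def choi {A A' : Type} [Fintype A] (φ : Mat A →ₗ[ℂ] Mat A') : Mat (A × A') :=
  fun p q => φ (Matrix.single p.1 q.1 1) p.2 q.2

/-- The linear map associated to a Choi matrix. -/
noncomputable def ofChoi {A A' : Type} [Fintype A] (C : Mat (A × A')) :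
    Mat A →ₗ[ℂ] Mat A' where
  toFun X := fun a' b' => ∑ a : A, ∑ b : A, X a b * C (a, a') (b, b')
  map_add' M N := by funext a b; simp [Matrix.add_apply, add_mul, Finset.sum_add_distrib]; rfl
  map_smul' c M := by funext a b; simp [Matrix.smul_apply, Finset.mul_sum, smul_eq_mul, mul_assoc]; erw [Matrix.smul_apply]; simp [Finset.mul_sum, smul_eq_mul, mul_assoc]

/-- The action of a supermap `S` (given in Choi form) on an extended channel, by tensor
extension with the identity on the ancillary systems. -/
noncomputable def supAct {A A' B B' : Type} [Fintype A] [Fintype A'] [Fintype B] [Fintype B']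
    (S : Mat (A × A') →ₗ[ℂ] Mat (B × B')) (X X' : Type) [Fintype X] [Fintype X']
    (Φ : Mat (A × X) →ₗ[ℂ] Mat (A' × X')) : Mat (B × X) →ₗ[ℂ] Mat (B' × X') :=
  ofChoi ((Matrix.reindexLinearEquiv ℂ ℂ (Equiv.prodProdProdComm B B' X X')
      (Equiv.prodProdProdComm B B' X X'))
    ((tensorMap S (LinearMap.id : Mat (X × X') →ₗ[ℂ] Mat (X × X')))
      ((Matrix.reindexLinearEquiv ℂ ℂ (Equiv.prodProdProdComm A X A' X')
        (Equiv.prodProdProdComm A X A' X')) (choi Φ))))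

/-- A quantum supermap of type `K → M`, in Choi representation: a completely positive
map on Choi operators whose tensor extension with the identity sends each dilation
extension of `K` into the corresponding dilation extension of `M`. -/
def IsSupermap {A A' B B' : Type} [Fintype A] [Fintype A'] [Fintype B] [Fintype B']
    (K : Set (Mat A →ₗ[ℂ] Mat A')) (M : Set (Mat B →ₗ[ℂ] Mat B'))
    (S : Mat (A × A') →ₗ[ℂ] Mat (B × B')) : Prop :=
  IsCP S ∧ ∀ (X X' : FintypeCat.{0}), ∀ Φ ∈ dExt K X X', supAct S X X' Φ ∈ dExt M X X'


open Matrix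

section Basic

variable {A A' X Y : Type}

lemma tensorMap_apply [Fintype A] [Fintype X] {X' : Type} (φ : Mat A →ₗ[ℂ] Mat A')
    (ψ : Mat X →ₗ[ℂ] Mat X') (W : Mat (A × X)) (p q : A' × X') :
    tensorMap φ ψ W p q = ∑ i, ∑ k, ∑ j, ∑ l,
      W (i, j) (k, l) * (φ (single i k 1) p.1 q.1 * ψ (single j l 1) p.2 q.2) := rfl

lemma ptrace_apply [Fintype X] (M : Mat (A × X)) (a b : A) :
    ptrace M a b = ∑ x, M (a, x) (b, x) := rfl

lemma assocL_apply (M : Mat ((A × X) × Y)) (p q : A × (X × Y)) :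
    assocL A X Y M p q = M ((p.1, p.2.1), p.2.2) ((q.1, q.2.1), q.2.2) := rfl

lemma assocR_apply (M : Mat (A × (X × Y))) (p q : (A × X) × Y) :
    assocR A X Y M p q = M (p.1.1, (p.1.2, p.2)) (q.1.1, (q.1.2, q.2)) := rfl

lemma map_eq_sum_smul_single [Fintype A] (φ : Mat A →ₗ[ℂ] Mat A') (W : Mat A) :
    φ W = ∑ i, ∑ k, W i k • φ (single i k 1) := by
  conv_lhs => rw [matrix_eq_sum_single W]
  simp only [map_sum, ← map_smul, smul_single, smul_eq_mul, mul_one]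

lemma tensorMap_id_right_apply [Fintype A] [Fintype X] (φ : Mat A →ₗ[ℂ] Mat A')
    (W : Mat (A × X)) (p q : A' × X) :
    tensorMap φ LinearMap.id W p q = φ (of fun i k => W (i, p.2) (k, q.2)) p.1 q.1 := by
  rw [map_eq_sum_smul_single φ]
  simp [tensorMap_apply, single, Matrix.sum_apply, ite_and, Finset.sum_ite_eq', mul_comm]

lemma tensorMap_id_left_apply [Fintype A] [Fintype X] (φ : Mat A →ₗ[ℂ] Mat A')
    (W : Mat (X × A)) (p q : X × A') :
    tensorMap LinearMap.id φ W p q = φ (of fun j l => W (p.1, j) (q.1, l)) p.2 q.2 := by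
  rw [map_eq_sum_smul_single φ]
  simp [tensorMap_apply, single, Matrix.sum_apply, ite_and, mul_ite, ite_mul,
    Finset.sum_ite_irrel, Finset.sum_ite_eq', mul_comm]

lemma prep_add (σ τ : Mat X) : (prep (σ + τ) : Mat A →ₗ[ℂ] Mat (A × X)) = prep σ + prep τ := by
  ext M p q
  exact mul_add _ _ _

lemma prep_smul (c : ℂ) (σ : Mat X) : (prep (c • σ) : Mat A →ₗ[ℂ] Mat (A × X)) = c • prep σ := by
  ext M p q
  exact mul_left_comm _ _ _

end Basic

lemma Matrix.PosSemidef.blockDiagonal {ι κ : Type} [Fintype ι] [Fintype κ] [DecidableEq ι]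
    {B : ι → Mat κ} (hB : ∀ i, (B i).PosSemidef) : (blockDiagonal B).PosSemidef := by
  refine .of_dotProduct_mulVec_nonneg ?_ fun x => ?_
  · simp [IsHermitian, blockDiagonal_conjTranspose, fun i => (hB i).1.eq]
  · have hsplit : star x ⬝ᵥ (Matrix.blockDiagonal B *ᵥ x) =
        ∑ i, star (fun u => x (u, i)) ⬝ᵥ (B i *ᵥ fun u => x (u, i)) := by
      simp only [dotProduct, mulVec, Pi.star_apply, blockDiagonal_apply, Fintype.sum_prod_type,
        ite_mul, zero_mul, Finset.sum_ite_eq, Finset.mem_univ, if_true, Finset.mul_sum]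
      rw [Finset.sum_comm]
    rw [hsplit]
    exact Finset.sum_nonneg fun i _ => (hB i).dotProduct_mulVec_nonneg _

lemma Matrix.trace_reindex {m n : Type} [Fintype m] [Fintype n] (e : m ≃ n) (M : Mat m) :
    (reindex e e M).trace = M.trace :=
  e.symm.sum_comp fun i => M i i

lemma Matrix.sum_trace_submatrix_prod {m ι : Type} [Fintype m] [Fintype ι] (M : Mat (m × ι)) :
    ∑ i, (M.submatrix (·, i) (·, i)).trace = M.trace := by
  simp only [trace, diag, submatrix_apply, Fintype.sum_prod_type]
  exact Finset.sum_comm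

section Control

variable {A A' X X' ι : Type}

def compress (A X : Type) {ι : Type} (i : ι) : Mat (A × (X × ι)) →ₗ[ℂ] Mat (A × X) where
  toFun N := N.submatrix (fun r => (r.1, (r.2, i))) (fun r => (r.1, (r.2, i)))
  map_add' _ _ := rfl
  map_smul' _ _ := rfl

lemma sum_trace_compress [Fintype A] [Fintype X] [Fintype ι] (N : Mat (A × (X × ι))) :
    ∑ i, (compress A X i N).trace = N.trace := by
  rw [← trace_reindex (Equiv.prodAssoc A X ι).symm N, ← sum_trace_submatrix_prod]
  rfl

/-- Measure the control register `ι` and apply `Φs i` on outcome `i`, keeping the outcome. -/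
def controlled (Φs : ι → (Mat (A × X) →ₗ[ℂ] Mat (A' × X'))) :
    Mat (A × (X × ι)) →ₗ[ℂ] Mat (A' × (X' × ι)) where
  toFun N := reindex (Equiv.prodAssoc A' X' ι) (Equiv.prodAssoc A' X' ι)
    (blockDiagonal fun i => Φs i (compress A X i N))
  map_add' N N' := by ext p q; simp only [map_add]; simp [blockDiagonal_apply]; split_ifs <;> simp
  map_smul' c N := by ext p q; simp only [map_smul]; simp [blockDiagonal_apply]

variable (Φs : ι → (Mat (A × X) →ₗ[ℂ] Mat (A' × X')))

lemma controlled_apply (N : Mat (A × (X × ι))) (p q : A' × (X' × ι)) :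
    controlled Φs N p q = if p.2.2 = q.2.2 then
      Φs p.2.2 (compress A X p.2.2 N) (p.1, p.2.1) (q.1, q.2.1) else 0 := by
  simp [controlled, blockDiagonal_apply]

lemma isChannel_controlled [Fintype A] [Fintype A'] [Fintype X] [Fintype X'] [Fintype ι]
    (h : ∀ i, IsChannel (Φs i)) : IsChannel (controlled Φs) := by
  refine ⟨fun E W hW => ?_, fun N => ?_⟩
  · let block (i : ι) : Mat ((A × X) × E) :=
      W.submatrix (fun r => ((r.1.1, (r.1.2, i)), r.2)) (fun r => ((r.1.1, (r.1.2, i)), r.2))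
    have hblock : tensorMap (controlled Φs) LinearMap.id W =
        (blockDiagonal fun i => tensorMap (Φs i) LinearMap.id (block i)).submatrix
          (fun p => (((p.1.1, p.1.2.1), p.2), p.1.2.2))
          (fun p => (((p.1.1, p.1.2.1), p.2), p.1.2.2)) := by
      ext ⟨⟨a, x, i⟩, e⟩ ⟨⟨b, y, j⟩, f⟩
      simp only [tensorMap_id_right_apply, controlled_apply, submatrix_apply, blockDiagonal_apply]
      split_ifs <;> rfl
    rw [hblock]
    exact (PosSemidef.blockDiagonal fun i => (h i).1 E _ (hW.submatrix _)).submatrix _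
  · rw [show controlled Φs N = reindex _ _ _ from rfl, trace_reindex, trace_blockDiagonal,
      ← sum_trace_compress]
    exact Finset.sum_congr rfl fun i _ => (h i).2 _

end Control

section Reduction

variable {A A' X X' Y Y' ι : Type} [Fintype ι]

lemma ptrace_assocR_controlled (Φs : ι → (Mat (A × X) →ₗ[ℂ] Mat (A' × X')))
    (N : Mat (A × (X × ι))) :
    ptrace (assocR A' X' ι (controlled Φs N)) = ∑ i, Φs i (compress A X i N) := by
  ext p q
  simp [ptrace_apply, assocR_apply, controlled_apply, Matrix.sum_apply]

lemma ptrace_comp_controlled_comp_prep [Fintype X'] (Φs : ι → (Mat (A × X) →ₗ[ℂ] Mat (A' × X')))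
    (ρ : Mat (X × ι)) :
    ptrace ∘ₗ controlled Φs ∘ₗ prep ρ =
      ∑ i, ptrace ∘ₗ Φs i ∘ₗ prep (ρ.submatrix (·, i) (·, i)) := by
  ext M a b
  simp only [LinearMap.comp_apply, LinearMap.sum_apply, Matrix.sum_apply, ptrace_apply,
    Fintype.sum_prod_type, controlled_apply, if_true]
  exact Finset.sum_comm

def reduceAncilla [Fintype Y'] (σ : Mat Y) (Ψ : Mat (A × (X × Y)) →ₗ[ℂ] Mat (A' × (X' × Y'))) :
    Mat (A × X) →ₗ[ℂ] Mat (A' × X') :=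
  ptrace ∘ₗ assocR A' X' Y' ∘ₗ Ψ ∘ₗ assocL A X Y ∘ₗ prep σ

lemma reduceAncilla_add_smul [Fintype Y'] (a b : ℂ) (σ τ : Mat Y)
    (Ψ : Mat (A × (X × Y)) →ₗ[ℂ] Mat (A' × (X' × Y'))) :
    reduceAncilla (a • σ + b • τ) Ψ = a • reduceAncilla σ Ψ + b • reduceAncilla τ Ψ := by
  simp only [reduceAncilla, prep_add, prep_smul, LinearMap.comp_add, LinearMap.comp_smul]

lemma reduceAncilla_controlled (σ : Mat ι) (Φs : ι → (Mat (A × X) →ₗ[ℂ] Mat (A' × X'))) :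
    reduceAncilla σ (controlled Φs) = ∑ i, σ i i • Φs i := by
  ext M p q
  have hcompress (i : ι) : compress A X i (assocL A X ι (prep σ M)) = σ i i • M := by
    ext r s
    exact mul_comm _ _
  simp only [reduceAncilla, LinearMap.comp_apply, ptrace_assocR_controlled, hcompress, map_smul,
    LinearMap.sum_apply, LinearMap.smul_apply]

end Reduction

section DilationExtension

variable {A A' X X' : Type} [Fintype A] [Fintype A'] [Fintype X] [Fintype X']
  {K : Set (Mat A →ₗ[ℂ] Mat A')}

lemma isDensity_uniform [Nonempty X] : IsDensity ((Fintype.card X : ℂ)⁻¹ • (1 : Mat X)) := by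
  refine ⟨PosSemidef.one.smul ?_, ?_⟩
  · exact inv_nonneg_of_nonneg (Nat.cast_nonneg _)
  · rw [trace_smul, trace_one, smul_eq_mul, inv_mul_cancel₀ (by simp)]

lemma exists_mem_ptrace_comp_prep_eq_trace_smul [Nonempty X]
    {Φ : Mat (A × X) →ₗ[ℂ] Mat (A' × X')} (hΦ : Φ ∈ dExt K X X') {ρ : Mat X}
    (hρ : ρ.PosSemidef) : ∃ k ∈ K, ptrace ∘ₗ Φ ∘ₗ prep ρ = ρ.trace • k := by
  by_cases htr : ρ.trace = 0
  · refine ⟨_, hΦ.2 _ isDensity_uniform, ?_⟩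
    rw [htr, hρ.trace_eq_zero_iff.mp htr, zero_smul, ← zero_smul ℂ (0 : Mat X), prep_smul,
      zero_smul, LinearMap.comp_zero, LinearMap.comp_zero]
  · refine ⟨_, hΦ.2 (ρ.trace⁻¹ • ρ) ⟨hρ.smul ?_, ?_⟩, ?_⟩
    · exact inv_nonneg_of_nonneg hρ.trace_nonneg
    · rw [trace_smul, smul_eq_mul, inv_mul_cancel₀ htr]
    · rw [prep_smul, LinearMap.comp_smul, LinearMap.comp_smul, smul_smul,
        mul_inv_cancel₀ htr, one_smul]

lemma controlled_mem_dExt (hK : IsConvexSet K) {Φ₀ Φ₁ : Mat (A × X) →ₗ[ℂ] Mat (A' × X')}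
    (h₀ : Φ₀ ∈ dExt K X X') (h₁ : Φ₁ ∈ dExt K X X') :
    controlled ![Φ₀, Φ₁] ∈ dExt K (X × Fin 2) (X' × Fin 2) := by
  refine ⟨isChannel_controlled _ (Fin.forall_fin_two.2 ⟨h₀.1, h₁.1⟩), fun ρ hρ => ?_⟩
  have : Nonempty X := by
    by_contra hX
    have : IsEmpty X := not_nonempty_iff.mp hX
    simpa [trace] using hρ.2
  let block (i : Fin 2) : Mat X := ρ.submatrix (·, i) (·, i)
  obtain ⟨k₀, hk₀, e₀⟩ := exists_mem_ptrace_comp_prep_eq_trace_smul h₀ (hρ.1.submatrix (·, 0))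
  obtain ⟨k₁, hk₁, e₁⟩ := exists_mem_ptrace_comp_prep_eq_trace_smul h₁ (hρ.1.submatrix (·, 1))
  have hsum : (block 0).trace + (block 1).trace = 1 := by
    rw [← hρ.2, ← sum_trace_submatrix_prod, Fin.sum_univ_two]
  have hpos (i : Fin 2) : 0 ≤ (block i).trace := (hρ.1.submatrix (·, i)).trace_nonneg
  have hre (i : Fin 2) : (block i).trace = (block i).trace.re :=
    Complex.eq_re_of_ofReal_le (r := 0) (by simpa using hpos i)
  have hle : (block 0).trace.re ≤ 1 := by
    have := congrArg Complex.re hsum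
    simp only [Complex.add_re, Complex.one_re] at this
    linarith [(Complex.nonneg_iff.mp (hpos 1)).1]
  convert hK k₀ hk₀ k₁ hk₁ _ (Complex.nonneg_iff.mp (hpos 0)).1 hle using 1
  rw [ptrace_comp_controlled_comp_prep, Fin.sum_univ_two]
  simp only [Matrix.cons_val_zero, Matrix.cons_val_one]
  rw [e₀, e₁, ← hre 0, ← hsum, add_sub_cancel_left]

end DilationExtension

section Slide

variable {A A' X X' Y Y' : Type}

-- `PUnit` is the side system `Z` of `slide`, which these two channels do not need.
def prepAncilla (σ : Mat Y) : Mat X →ₗ[ℂ] Mat ((X × Y) × PUnit) :=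
  (reindexLinearEquiv ℂ ℂ (Equiv.prodPUnit (X × Y)).symm
    (Equiv.prodPUnit (X × Y)).symm).toLinearMap ∘ₗ prep σ

def discardAncilla (X' Y' : Type) [Fintype Y'] : Mat ((X' × Y') × PUnit) →ₗ[ℂ] Mat X' :=
  ptrace ∘ₗ assocL X' Y' PUnit

lemma prepAncilla_apply (σ : Mat Y) (M : Mat X) (p q : (X × Y) × PUnit) :
    prepAncilla σ M p q = M p.1.1 q.1.1 * σ p.1.2 q.1.2 := rfl

lemma discardAncilla_apply [Fintype Y'] (N : Mat ((X' × Y') × PUnit)) (x y : X') :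
    discardAncilla X' Y' N x y = ∑ z : Y' × PUnit, N ((x, z.1), z.2) ((y, z.1), z.2) := rfl

lemma isChannel_prepAncilla [Fintype X] [Fintype Y] {σ : Mat Y} (hσ : IsDensity σ) :
    IsChannel (prepAncilla (X := X) σ) := by
  refine ⟨fun E W hW => ?_, fun M => ?_⟩
  · have hkron : tensorMap (prepAncilla σ) LinearMap.id W =
        (kroneckerMap (· * ·) W σ).submatrix (fun p => ((p.1.1.1, p.2), p.1.1.2))
          (fun p => ((p.1.1.1, p.2), p.1.1.2)) := by
      ext p q
      rw [tensorMap_id_right_apply]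
      rfl
    rw [hkron]
    exact (hW.kronecker hσ.1).submatrix _
  · have htrace : (prepAncilla σ M).trace = M.trace * σ.trace := by
      simp [trace, prepAncilla_apply, Fintype.sum_prod_type, Finset.sum_mul_sum]
    rw [htrace, hσ.2, mul_one]

lemma isChannel_discardAncilla [Fintype X'] [Fintype Y'] : IsChannel (discardAncilla X' Y') := by
  refine ⟨fun E W hW => ?_, fun N => ?_⟩
  · have hsum : tensorMap (discardAncilla X' Y') LinearMap.id W =
        ∑ z : Y' × PUnit, W.submatrix (fun m : X' × E => (((m.1, z.1), z.2), m.2))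
          (fun m : X' × E => (((m.1, z.1), z.2), m.2)) := by
      ext p q
      rw [tensorMap_id_right_apply, discardAncilla_apply, Matrix.sum_apply]
      rfl
    rw [hsum]
    exact posSemidef_sum _ fun z _ => hW.submatrix _
  · simp [trace, discardAncilla_apply, Fintype.sum_prod_type]

-- The instances on the composite systems are left arbitrary because in `LocApp.natural` they
-- are those of `FintypeCat` objects (`Fintype.ofFinite`), not the product instances.
lemma slide_prepAncilla_discardAncilla [Fintype A] [Fintype A'] [Fintype X] [Fintype X']
    [Fintype Y] [Fintype Y'] [iXY : Fintype (X × Y)] [iXY' : Fintype (X' × Y')]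
    [iZ : Fintype PUnit] (σ : Mat Y) (Ψ : Mat (A × (X × Y)) →ₗ[ℂ] Mat (A' × (X' × Y'))) :
    slide (prepAncilla σ) (discardAncilla X' Y') Ψ = reduceAncilla σ Ψ := by
  obtain rfl : iXY = instFintypeProd X Y := Subsingleton.elim _ _
  obtain rfl : iXY' = instFintypeProd X' Y' := Subsingleton.elim _ _
  obtain rfl : iZ = PUnit.fintype := Subsingleton.elim _ _
  ext M p q
  simp only [slide, reduceAncilla, LinearMap.comp_apply, tensorMap_id_left_apply,
    discardAncilla_apply, assocL_apply, tensorMap_id_right_apply, Fintype.sum_prod_type,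
    Finset.univ_unique, Finset.sum_singleton, ptrace_apply, assocR_apply]
  rfl

end Slide

lemma LocApp.app_eq_reduceAncilla {A A' B B' : Type} [Fintype A] [Fintype A'] [Fintype B]
    [Fintype B'] {K : Set (Mat A →ₗ[ℂ] Mat A')} {M : Set (Mat B →ₗ[ℂ] Mat B')} (S : LocApp K M)
    {X X' : FintypeCat.{0}} {Y Y' : Type} [Fintype Y] [Fintype Y'] {σ : Mat Y}
    (hσ : IsDensity σ) {Ψ : Mat (A × (X × Y)) →ₗ[ℂ] Mat (A' × (X' × Y'))}
    (hΨ : Ψ ∈ dExt K (X × Y) (X' × Y')) (Φ : dExt K X X') (hΦ : Φ.1 = reduceAncilla σ Ψ) :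
    (S.app X X' Φ).1 =
      reduceAncilla σ (S.app (.of (X × Y)) (.of (X' × Y')) ⟨Ψ, by convert hΨ⟩).1 := by
  obtain ⟨Φ, hΦK⟩ := Φ
  subst hΦ
  have hnat := S.natural (.of (X × Y)) (.of (X' × Y')) X X' (.of PUnit)
    (prepAncilla σ) (discardAncilla X' Y') (by convert isChannel_prepAncilla (X := X) hσ)
    (by convert isChannel_discardAncilla (X' := X') (Y' := Y')) ⟨Ψ, by convert hΨ⟩
  simp only [slide_prepAncilla_discardAncilla] at hnat
  exact hnat hΦK

def diagState (p : ℝ) : Mat (Fin 2) := diagonal ![(p : ℂ), 1 - p]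

lemma isDensity_diagState {p : ℝ} (hp0 : 0 ≤ p) (hp1 : p ≤ 1) : IsDensity (diagState p) := by
  refine ⟨PosSemidef.diagonal fun i => ?_, by simp [diagState]⟩
  fin_cases i
  · simpa using hp0
  · simpa [← Complex.ofReal_one, ← Complex.ofReal_sub] using hp1

lemma diagState_eq_smul_add_smul (p : ℝ) :
    diagState p = (p : ℂ) • diagState 1 + (1 - (p : ℂ)) • diagState 0 := by
  ext i j
  fin_cases i <;> fin_cases j <;> simp [diagState]

lemma reduceAncilla_diagState_controlled {A A' X X' : Type} [Fintype X'] (p : ℝ)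
    (Φ₀ Φ₁ : Mat (A × X) →ₗ[ℂ] Mat (A' × X')) :
    reduceAncilla (diagState p) (controlled ![Φ₀, Φ₁]) = (p : ℂ) • Φ₀ + (1 - (p : ℂ)) • Φ₁ := by
  simp [reduceAncilla_controlled, Fin.sum_univ_two, diagState]

theorem locApp_convex_linear_general (A A' B B' : FintypeCat.{0})
    (K : Set (Mat A →ₗ[ℂ] Mat A')) (M : Set (Mat B →ₗ[ℂ] Mat B'))
    (hKconv : IsConvexSet K)
    (S : LocApp K M) (X X' : FintypeCat.{0})
    (Φ₀ Φ₁ : ↥(dExt K X X')) (p : ℝ) (hp0 : 0 ≤ p) (hp1 : p ≤ 1)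
    (h : (p : ℂ) • Φ₀.1 + (1 - (p : ℂ)) • Φ₁.1 ∈ dExt K X X') :
    (S.app X X' ⟨(p : ℂ) • Φ₀.1 + (1 - (p : ℂ)) • Φ₁.1, h⟩).1 =
      (p : ℂ) • (S.app X X' Φ₀).1 + (1 - (p : ℂ)) • (S.app X X' Φ₁).1 := by
  have hΨ := controlled_mem_dExt hKconv Φ₀.2 Φ₁.2
  set SΨ := S.app (.of (X × Fin 2)) (.of (X' × Fin 2)) ⟨_, by convert hΨ⟩
  have hS (q : ℝ) (hq0 : 0 ≤ q) (hq1 : q ≤ 1) (Φ : dExt K X X')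
      (hΦ : Φ.1 = (q : ℂ) • Φ₀.1 + (1 - (q : ℂ)) • Φ₁.1) :
      (S.app X X' Φ).1 = reduceAncilla (diagState q) SΨ.1 :=
    S.app_eq_reduceAncilla (isDensity_diagState hq0 hq1) hΨ Φ
      (hΦ.trans (reduceAncilla_diagState_controlled q _ _).symm)
  rw [hS p hp0 hp1 _ rfl, hS 1 zero_le_one le_rfl Φ₀ (by simp),
    hS 0 le_rfl zero_le_one Φ₁ (by simp), diagState_eq_smul_add_smul, reduceAncilla_add_smul]

/-- Every locally-applicable transformation between convex sets of
quantum channels preserves convex combinations. -/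
theorem locApp_convex_linear (A A' B B' : FintypeCat.{0})
    (K : Set (Mat A →ₗ[ℂ] Mat A')) (M : Set (Mat B →ₗ[ℂ] Mat B'))
    (hK : ∀ φ ∈ K, IsChannel φ) (hM : ∀ φ ∈ M, IsChannel φ)
    (hKconv : IsConvexSet K) (hMconv : IsConvexSet M)
    (S : LocApp K M) (X X' : FintypeCat.{0})
    (Φ₀ Φ₁ : ↥(dExt K X X')) (p : ℝ) (hp0 : 0 ≤ p) (hp1 : p ≤ 1)
    (h : (p : ℂ) • Φ₀.1 + (1 - (p : ℂ)) • Φ₁.1 ∈ dExt K X X') :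
    (S.app X X' ⟨(p : ℂ) • Φ₀.1 + (1 - (p : ℂ)) • Φ₁.1, h⟩).1 =
      (p : ℂ) • (S.app X X' Φ₀).1 + (1 - (p : ℂ)) • (S.app X X' Φ₁).1 :=
  locApp_convex_linear_general A A' B B' K M hKconv S X X' Φ₀ Φ₁ p hp0 hp1 h
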